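/- Let A be a Hopf algebra, B a left coideal subalgebra, R a right ideal of B⁺, and define R' = Δ̄⁻¹(Ā ⊗ R) where Δ̄ = (π ⊗ id)∘Δ and π : A → Ā = A/(B⁺A). Then R' is a right ideal of B⁺ contained in R, it satisfies Δ̄(R') ⊆ Ā ⊗ R', and the associated equivariant derivations coincide: δ_R = δ_{R'}. -/
import Mathlib


open TensorProduct

set_option maxHeartbeats 1000000
noncomputable section

variable (A : Type) [Ring A] [HopfAlgebra ℂ A] (B : Subalgebra ℂ A)

/-- The counit of `A` restricted to `B`. -/
def epsB : ↥B →ₐ[ℂ] ℂ := (Bialgebra.counitAlgHom ℂ A).comp B.val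

/-- `B⁺ = B ∩ ker ε`. -/
def Bplus : Submodule ℂ ↥B := LinearMap.ker (epsB A B).toLinearMap

/-- The right ideal `B⁺A` of `A`. -/
def BplusA : Submodule ℂ A :=
  Submodule.span ℂ {x : A | ∃ b : ↥B, epsB A B b = 0 ∧ ∃ a : A, x = (b : A) * a}

/-- `Δ̄ = (π ⊗ id)∘Δ : A → Ā ⊗ A`, `π : A → Ā = A/(B⁺A)`. -/
def DeltaBar : A →ₗ[ℂ] (A ⧸ BplusA A B) ⊗[ℂ] A :=
  (TensorProduct.map (BplusA A B).mkQ LinearMap.id) ∘ₗ Coalgebra.comul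

/-- `Ā ⊗ N` viewed as a submodule of `Ā ⊗ A`, for `N ⊆ A`. -/
def AbarOx (N : Submodule ℂ A) : Submodule ℂ ((A ⧸ BplusA A B) ⊗[ℂ] A) :=
  LinearMap.range (TensorProduct.map
    (LinearMap.id : (A ⧸ BplusA A B) →ₗ[ℂ] (A ⧸ BplusA A B)) N.subtype)

/-- `a ↦ a⁺ = a − ε(a)1` on `A`. -/
def plusA : A →ₗ[ℂ] A :=
  LinearMap.id - (Algebra.linearMap ℂ A).comp (Coalgebra.counit (R := ℂ))

/-- `A ⊗ N` as a submodule of `A ⊗ A`. -/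
def AOx (N : Submodule ℂ A) : Submodule ℂ (A ⊗[ℂ] A) :=
  LinearMap.range (TensorProduct.map (LinearMap.id : A →ₗ[ℂ] A) N.subtype)

variable (comulB : ↥B →ₗ[ℂ] A ⊗[ℂ] ↥B)

/-- `Φ a b = Σ a·b₍₁₎ ⊗ b₍₂₎⁺ ∈ A ⊗ A`; the derivation `δ_R` associated to a
right ideal `R ⊆ B⁺` satisfies `Σᵢ aᵢ δ_R bᵢ = 0` iff `Σᵢ Φ aᵢ bᵢ ∈ A ⊗ R`. -/
def PhiE (a b : ↥B) : A ⊗[ℂ] A :=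
  (TensorProduct.map (LinearMap.mulLeft ℂ (a : A))
    ((plusA A) ∘ₗ B.val.toLinearMap)) (comulB b)

lemma aux_counit_coe (b : ↥B) : Coalgebra.counit (R := ℂ) (b : A) = epsB A B b := rfl

lemma aux_mul_mem_BplusA {x : A} (hx : x ∈ BplusA A B) (v : A) : x * v ∈ BplusA A B := by
  induction hx using Submodule.span_induction with
  | mem y hy =>
      obtain ⟨b, hb, a, rfl⟩ := hy
      exact Submodule.subset_span ⟨b, hb, a * v, by rw [mul_assoc]⟩
  | zero => simpa using Submodule.zero_mem _
  | add y z _ _ hy hz => simpa [add_mul] using Submodule.add_mem _ hy hz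
  | smul c y _ hy => simpa [smul_mul_assoc] using Submodule.smul_mem _ c hy

lemma aux_epsB_plus (b : ↥B) : epsB A B (b - epsB A B b • 1) = 0 := by
  simp [map_sub, map_smul]

lemma aux_mkQ_mul_coe (b : ↥B) (a : A) :
    (BplusA A B).mkQ ((b : A) * a) = epsB A B b • (BplusA A B).mkQ a := by
  have h1 : ((b : A) * a) - epsB A B b • a ∈ BplusA A B := by
    apply Submodule.subset_span
    refine ⟨b - epsB A B b • 1, aux_epsB_plus A B b, a, ?_⟩
    push_cast
    rw [sub_mul, smul_mul_assoc, one_mul]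
  have : (BplusA A B).mkQ (((b : A) * a) - epsB A B b • a) = 0 :=
    (Submodule.Quotient.mk_eq_zero _).mpr h1
  rw [map_sub, map_smul, sub_eq_zero] at this
  exact this

lemma aux_CU (c : ↥B)
    (hc : (TensorProduct.map LinearMap.id B.val.toLinearMap) (comulB c) = Coalgebra.comul (c : A))
    (s : Finset (A × ↥B)) (hs : comulB c = ∑ p ∈ s, p.1 ⊗ₜ p.2) :
    ∑ p ∈ s, epsB A B p.2 • p.1 = (c : A) := by
  have h := Coalgebra.lTensor_counit_comul (R := ℂ) (c : A)
  rw [← hc, hs] at h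
  have h2 := congrArg (TensorProduct.rid ℂ A) h
  simpa [map_sum, aux_counit_coe, mul_comm] using h2

lemma aux_mapmap {M₁ M₂ M₃ N₁ N₂ N₃ : Type}
    [AddCommGroup M₁] [Module ℂ M₁] [AddCommGroup M₂] [Module ℂ M₂]
    [AddCommGroup M₃] [Module ℂ M₃] [AddCommGroup N₁] [Module ℂ N₁]
    [AddCommGroup N₂] [Module ℂ N₂] [AddCommGroup N₃] [Module ℂ N₃]
    (f₂ : M₂ →ₗ[ℂ] M₃) (f₁ : M₁ →ₗ[ℂ] M₂) (g₂ : N₂ →ₗ[ℂ] N₃) (g₁ : N₁ →ₗ[ℂ] N₂)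
    (x : M₁ ⊗[ℂ] N₁) :
    TensorProduct.map f₂ g₂ (TensorProduct.map f₁ g₁ x)
      = TensorProduct.map (f₂ ∘ₗ f₁) (g₂ ∘ₗ g₁) x := by
  rw [TensorProduct.map_comp]; rfl

-- core computation: (id ⊗ π)(Δ(b) * t) = (mulLeft b ⊗ id)((id ⊗ π) t) for b ∈ B
lemma aux_CL (b : ↥B)
    (hb : (TensorProduct.map LinearMap.id B.val.toLinearMap) (comulB b) = Coalgebra.comul (b : A))
    (t : A ⊗[ℂ] A) :
    (TensorProduct.map LinearMap.id (BplusA A B).mkQ) (Coalgebra.comul (b : A) * t)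
      = (TensorProduct.map (LinearMap.mulLeft ℂ (b : A)) LinearMap.id)
          ((TensorProduct.map LinearMap.id (BplusA A B).mkQ) t) := by
  obtain ⟨s, hs⟩ := TensorProduct.exists_finset (comulB b)
  obtain ⟨u, hu⟩ := TensorProduct.exists_finset t
  have hΔ : Coalgebra.comul (R := ℂ) (b : A) = ∑ p ∈ s, p.1 ⊗ₜ (p.2 : A) := by
    rw [← hb, hs]; simp [map_sum]
  have hcu := aux_CU A B comulB b hb s hs
  rw [hΔ, hu, Finset.sum_mul_sum]
  simp only [Algebra.TensorProduct.tmul_mul_tmul, map_sum, TensorProduct.map_tmul,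
    LinearMap.id_coe, id_eq, aux_mkQ_mul_coe, TensorProduct.tmul_smul,
    LinearMap.mulLeft_apply]
  rw [Finset.sum_comm]
  apply Finset.sum_congr rfl
  intro q _
  rw [← hcu, Finset.sum_mul, TensorProduct.sum_tmul]
  exact Finset.sum_congr rfl fun p _ => by
    rw [smul_mul_assoc, TensorProduct.smul_tmul']

-- SI1 : DeltaBar of c⁺
lemma aux_DeltaBar_plus (c : ↥B)
    (hc : (TensorProduct.map LinearMap.id B.val.toLinearMap) (comulB c) = Coalgebra.comul (c : A)) :
    DeltaBar A B (plusA A (c : A))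
      = (TensorProduct.map (BplusA A B).mkQ ((plusA A) ∘ₗ B.val.toLinearMap)) (comulB c) := by
  obtain ⟨s, hs⟩ := TensorProduct.exists_finset (comulB c)
  have hΔ : Coalgebra.comul (R := ℂ) (c : A) = ∑ p ∈ s, p.1 ⊗ₜ (p.2 : A) := by
    rw [← hc, hs]; simp [map_sum]
  have hcu := aux_CU A B comulB c hc s hs
  have hplus : ∀ x : A, plusA A x = x - Coalgebra.counit (R := ℂ) x • 1 := by
    intro x
    simp [plusA, Algebra.linearMap_apply, Algebra.algebraMap_eq_smul_one]
  have hmk : (BplusA A B).mkQ (c : A) = epsB A B c • (BplusA A B).mkQ 1 := by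
    simpa using aux_mkQ_mul_coe A B c 1
  have key : ∑ p ∈ s, epsB A B p.2 • ((BplusA A B).mkQ p.1 ⊗ₜ[ℂ] (1:A))
      = epsB A B c • ((BplusA A B).mkQ 1 ⊗ₜ[ℂ] (1:A)) := by
    calc ∑ p ∈ s, epsB A B p.2 • ((BplusA A B).mkQ p.1 ⊗ₜ[ℂ] (1:A))
        = (∑ p ∈ s, epsB A B p.2 • (BplusA A B).mkQ p.1) ⊗ₜ[ℂ] (1:A) := by
          rw [TensorProduct.sum_tmul]
          exact Finset.sum_congr rfl fun p _ => TensorProduct.smul_tmul' _ _ _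
      _ = ((BplusA A B).mkQ (∑ p ∈ s, epsB A B p.2 • p.1)) ⊗ₜ[ℂ] (1:A) := by
          rw [map_sum]; simp [map_smul]
      _ = ((BplusA A B).mkQ (c : A)) ⊗ₜ[ℂ] (1:A) := by rw [hcu]
      _ = epsB A B c • ((BplusA A B).mkQ 1 ⊗ₜ[ℂ] (1:A)) := by
          rw [hmk, TensorProduct.smul_tmul']
  have e1 : DeltaBar A B (plusA A (c : A))
      = (∑ p ∈ s, (BplusA A B).mkQ p.1 ⊗ₜ[ℂ] (p.2 : A))
        - epsB A B c • ((BplusA A B).mkQ 1 ⊗ₜ[ℂ] (1:A)) := by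
    rw [hplus, map_sub, map_smul, aux_counit_coe]
    congr 1
    · show (TensorProduct.map (BplusA A B).mkQ LinearMap.id) (Coalgebra.comul (c:A)) = _
      rw [hΔ, map_sum]; simp
    · show epsB A B c • (TensorProduct.map (BplusA A B).mkQ LinearMap.id)
        (Coalgebra.comul (1:A)) = _
      rw [Bialgebra.comul_one, Algebra.TensorProduct.one_def]; simp
  have e2 : (TensorProduct.map (BplusA A B).mkQ ((plusA A) ∘ₗ B.val.toLinearMap)) (comulB c)
      = (∑ p ∈ s, (BplusA A B).mkQ p.1 ⊗ₜ[ℂ] (p.2 : A))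
        - ∑ p ∈ s, epsB A B p.2 • ((BplusA A B).mkQ p.1 ⊗ₜ[ℂ] (1:A)) := by
    rw [hs, map_sum, ← Finset.sum_sub_distrib]
    refine Finset.sum_congr rfl fun p _ => ?_
    rw [TensorProduct.map_tmul, LinearMap.comp_apply, hplus]
    rw [TensorProduct.tmul_sub, TensorProduct.tmul_smul]
    rfl
  rw [e1, e2, key]

lemma aux_comulB_coassoc
    (hcomulB : ∀ b : ↥B, (TensorProduct.map LinearMap.id B.val.toLinearMap) (comulB b)
      = Coalgebra.comul (b : A)) (b : ↥B) :
    (TensorProduct.assoc ℂ A A ↥B) ((TensorProduct.map Coalgebra.comul LinearMap.id) (comulB b))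
      = (TensorProduct.map LinearMap.id comulB) (comulB b) := by
  have hval : Function.Injective (B.val.toLinearMap) := Subtype.val_injective
  have h1 : Function.Injective (LinearMap.lTensor A B.val.toLinearMap) :=
    Module.Flat.lTensor_preserves_injective_linearMap _ hval
  have h2 : Function.Injective (LinearMap.lTensor A (LinearMap.lTensor A B.val.toLinearMap)) :=
    Module.Flat.lTensor_preserves_injective_linearMap _ h1
  apply h2
  show (TensorProduct.map LinearMap.id (TensorProduct.map LinearMap.id B.val.toLinearMap))
      ((TensorProduct.assoc ℂ A A ↥B) ((TensorProduct.map Coalgebra.comul LinearMap.id) (comulB b)))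
    = (TensorProduct.map LinearMap.id (TensorProduct.map LinearMap.id B.val.toLinearMap))
      ((TensorProduct.map LinearMap.id comulB) (comulB b))
  have hcompB : (TensorProduct.map LinearMap.id B.val.toLinearMap) ∘ₗ comulB
      = Coalgebra.comul ∘ₗ B.val.toLinearMap := LinearMap.ext fun c => by
    simpa using hcomulB c
  rw [TensorProduct.map_map_assoc, aux_mapmap, aux_mapmap]
  simp only [LinearMap.comp_id, LinearMap.id_comp, TensorProduct.map_id]
  rw [hcompB]
  have e1 : TensorProduct.map Coalgebra.comul B.val.toLinearMap (comulB b)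
      = TensorProduct.map Coalgebra.comul LinearMap.id
          ((TensorProduct.map LinearMap.id B.val.toLinearMap) (comulB b)) := by
    rw [aux_mapmap, LinearMap.comp_id, LinearMap.id_comp]
  have e2 : TensorProduct.map LinearMap.id (Coalgebra.comul ∘ₗ B.val.toLinearMap) (comulB b)
      = TensorProduct.map LinearMap.id Coalgebra.comul
          ((TensorProduct.map LinearMap.id B.val.toLinearMap) (comulB b)) := by
    rw [aux_mapmap, LinearMap.id_comp]
  rw [e1, e2, hcomulB]
  exact Coalgebra.coassoc_apply (R := ℂ) ((b : A))

lemma aux_q_ker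
    (hcomulB : ∀ b : ↥B, (TensorProduct.map LinearMap.id B.val.toLinearMap) (comulB b)
      = Coalgebra.comul (b : A)) :
    BplusA A B ≤ LinearMap.ker ((TensorProduct.map (BplusA A B).mkQ (BplusA A B).mkQ) ∘ₗ
      (Coalgebra.comul : A →ₗ[ℂ] A ⊗[ℂ] A)) := by
  intro x hx
  rw [LinearMap.mem_ker]
  induction hx using Submodule.span_induction with
  | mem y hy =>
      obtain ⟨b, hb, a, rfl⟩ := hy
      rw [LinearMap.comp_apply, Bialgebra.comul_mul]
      have hsplit : (TensorProduct.map (BplusA A B).mkQ (BplusA A B).mkQ)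
          (Coalgebra.comul ((b:A)) * Coalgebra.comul a)
          = (TensorProduct.map (BplusA A B).mkQ LinearMap.id)
              ((TensorProduct.map LinearMap.id (BplusA A B).mkQ)
                (Coalgebra.comul ((b:A)) * Coalgebra.comul a)) := by
        rw [aux_mapmap]; simp
      rw [hsplit, aux_CL A B comulB b (hcomulB b), aux_mapmap]
      have h2 : (BplusA A B).mkQ ∘ₗ LinearMap.mulLeft ℂ (b:A) = 0 := by
        ext u
        simp only [LinearMap.comp_apply, LinearMap.mulLeft_apply, LinearMap.zero_apply]
        rw [aux_mkQ_mul_coe, hb, zero_smul]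
      rw [h2, TensorProduct.map_zero_left, LinearMap.zero_apply]
  | zero => simp
  | add y z _ _ hy hz => rw [map_add, hy, hz, add_zero]
  | smul c y _ hy => rw [map_smul, hy, smul_zero]

-- M1 : A⊗N stable under right multiplication by Δ(b), b ∈ B
lemma aux_AOx_mul (N : Submodule ℂ A)
    (hN : ∀ x ∈ N, ∀ c : ↥B, x * (c : A) ∈ N) (b : ↥B)
    (hb : (TensorProduct.map LinearMap.id B.val.toLinearMap) (comulB b) = Coalgebra.comul (b : A))
    {t : A ⊗[ℂ] A} (ht : t ∈ AOx A N) :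
    t * Coalgebra.comul (b : A) ∈ AOx A N := by
  obtain ⟨s, hs⟩ := TensorProduct.exists_finset (comulB b)
  have hΔ : Coalgebra.comul (R := ℂ) (b : A) = ∑ p ∈ s, p.1 ⊗ₜ (p.2 : A) := by
    rw [← hb, hs]; simp [map_sum]
  obtain ⟨z, rfl⟩ := ht
  induction z using TensorProduct.induction_on with
  | zero => simpa using Submodule.zero_mem _
  | tmul u r =>
      rw [TensorProduct.map_tmul, hΔ, Finset.mul_sum]
      apply Submodule.sum_mem
      intro p _
      simp only [LinearMap.id_coe, id_eq, Submodule.coe_subtype,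
        Algebra.TensorProduct.tmul_mul_tmul]
      exact ⟨(u * p.1) ⊗ₜ ⟨(r : A) * (p.2 : A), hN _ r.2 p.2⟩, by simp⟩
  | add z₁ z₂ h₁ h₂ =>
      rw [map_add, add_mul]
      exact Submodule.add_mem _ h₁ h₂

-- M2 : (B⁺A)⊗A is a right ideal of A⊗A
lemma aux_ker_mul {t : A ⊗[ℂ] A}
    (ht : t ∈ LinearMap.range (TensorProduct.map (BplusA A B).subtype
      (LinearMap.id : A →ₗ[ℂ] A))) (u : A ⊗[ℂ] A) :
    t * u ∈ LinearMap.range (TensorProduct.map (BplusA A B).subtype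
      (LinearMap.id : A →ₗ[ℂ] A)) := by
  obtain ⟨y, rfl⟩ := ht
  induction y using TensorProduct.induction_on with
  | zero => simpa using Submodule.zero_mem _
  | tmul m c =>
      induction u using TensorProduct.induction_on with
      | zero => simpa using Submodule.zero_mem _
      | tmul v w =>
          simp only [TensorProduct.map_tmul, Submodule.coe_subtype, LinearMap.id_coe, id_eq,
            Algebra.TensorProduct.tmul_mul_tmul]
          exact ⟨⟨(m : A) * v, aux_mul_mem_BplusA A B m.2 v⟩ ⊗ₜ (c * w), by simp⟩
      | add u₁ u₂ h₁ h₂ =>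
          rw [mul_add]
          exact Submodule.add_mem _ h₁ h₂
  | add y₁ y₂ h₁ h₂ =>
      rw [map_add, add_mul]
      exact Submodule.add_mem _ h₁ h₂

-- M3 : image of A⊗N under π⊗id lands in Ā⊗N
lemma aux_map_AOx (N : Submodule ℂ A) {t : A ⊗[ℂ] A} (ht : t ∈ AOx A N) :
    (TensorProduct.map (BplusA A B).mkQ LinearMap.id) t ∈ AbarOx A B N := by
  obtain ⟨z, rfl⟩ := ht
  rw [aux_mapmap]
  refine ⟨(TensorProduct.map (BplusA A B).mkQ LinearMap.id) z, ?_⟩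
  rw [aux_mapmap]
  simp

-- M5 : surjectivity onto Ā⊗N
lemma aux_AbarOx_lift (N : Submodule ℂ A) {y : (A ⧸ BplusA A B) ⊗[ℂ] A}
    (hy : y ∈ AbarOx A B N) :
    ∃ t ∈ AOx A N, (TensorProduct.map (BplusA A B).mkQ LinearMap.id) t = y := by
  obtain ⟨z, rfl⟩ := hy
  induction z using TensorProduct.induction_on with
  | zero => exact ⟨0, Submodule.zero_mem _, by simp⟩
  | tmul abar r =>
      obtain ⟨u, rfl⟩ := (BplusA A B).mkQ_surjective abar
      refine ⟨u ⊗ₜ (r : A), ⟨u ⊗ₜ r, by simp⟩, by simp⟩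
  | add z₁ z₂ h₁ h₂ =>
      obtain ⟨t₁, ht₁, he₁⟩ := h₁
      obtain ⟨t₂, ht₂, he₂⟩ := h₂
      exact ⟨t₁ + t₂, Submodule.add_mem _ ht₁ ht₂, by rw [map_add, he₁, he₂, map_add]⟩

-- M6 : assoc of (U ⊗ Ā) ⊗ N lands in U ⊗ (Ā ⊗ N)
lemma aux_assoc_mem (U : Type) [AddCommGroup U] [Module ℂ U] (N : Submodule ℂ A)
    (u : (U ⊗[ℂ] (A ⧸ BplusA A B)) ⊗[ℂ] ↥N) :
    (TensorProduct.assoc ℂ U (A ⧸ BplusA A B) A)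
        ((TensorProduct.map LinearMap.id N.subtype) u)
      ∈ LinearMap.range (LinearMap.lTensor U (AbarOx A B N).subtype) := by
  induction u using TensorProduct.induction_on with
  | zero => simpa using Submodule.zero_mem _
  | tmul y r =>
      induction y using TensorProduct.induction_on with
      | zero => simpa [TensorProduct.zero_tmul] using Submodule.zero_mem _
      | tmul p q =>
          refine ⟨p ⊗ₜ ⟨q ⊗ₜ (r : A), ⟨q ⊗ₜ r, by simp⟩⟩, ?_⟩
          simp [TensorProduct.assoc_tmul]
      | add y₁ y₂ h₁ h₂ =>
          rw [TensorProduct.add_tmul, map_add, map_add]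
          exact Submodule.add_mem _ h₁ h₂
  | add u₁ u₂ h₁ h₂ =>
      rw [map_add, map_add]
      exact Submodule.add_mem _ h₁ h₂

-- AOx is monotone
lemma aux_AOx_mono {N N' : Submodule ℂ A} (h : N ≤ N') {t : A ⊗[ℂ] A}
    (ht : t ∈ AOx A N) : t ∈ AOx A N' := by
  obtain ⟨z, rfl⟩ := ht
  induction z using TensorProduct.induction_on with
  | zero => simpa using Submodule.zero_mem _
  | tmul u r => exact ⟨u ⊗ₜ ⟨(r : A), h r.2⟩, by simp⟩
  | add z₁ z₂ h₁ h₂ =>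
      rw [map_add]
      exact Submodule.add_mem _ h₁ h₂

lemma lTensor_mem_range_of (U V W : Type) [AddCommGroup U] [Module ℂ U]
    [AddCommGroup V] [Module ℂ V] [AddCommGroup W] [Module ℂ W]
    (f : V →ₗ[ℂ] W) (S : Submodule ℂ W) (t : U ⊗[ℂ] V)
    (ht : LinearMap.lTensor U f t ∈ LinearMap.range (LinearMap.lTensor U S.subtype)) :
    t ∈ LinearMap.range (LinearMap.lTensor U (S.comap f).subtype) := by
  have hK : S.comap f = LinearMap.ker (S.mkQ ∘ₗ f) := by
    rw [LinearMap.ker_comp, Submodule.ker_mkQ]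
  have h0 : LinearMap.lTensor U (S.mkQ ∘ₗ f) t = 0 := by
    obtain ⟨y, hy⟩ := ht
    rw [LinearMap.lTensor_comp, LinearMap.comp_apply, ← hy, ← LinearMap.comp_apply, ← LinearMap.lTensor_comp]
    have : S.mkQ ∘ₗ S.subtype = 0 := by
      ext x; simp
    rw [this, LinearMap.lTensor_zero, LinearMap.zero_apply]
  set K := S.comap f with hKdef
  set g' : (V ⧸ K) →ₗ[ℂ] (W ⧸ S) := Submodule.liftQ K (S.mkQ ∘ₗ f) (le_of_eq hK) with hg'
  have hinj : Function.Injective g' := by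
    rw [← LinearMap.ker_eq_bot, Submodule.ker_liftQ_eq_bot]
    exact le_of_eq hK.symm
  have h1 : LinearMap.lTensor U g' (LinearMap.lTensor U K.mkQ t) = 0 := by
    rw [← LinearMap.comp_apply, ← LinearMap.lTensor_comp, Submodule.liftQ_mkQ, h0]
  have h2 : LinearMap.lTensor U K.mkQ t = 0 := by
    have := Module.Flat.lTensor_preserves_injective_linearMap (M := U) g' hinj
    apply this
    simpa using h1
  rw [← lTensor_mkQ]
  exact h2

/-- Theorem 1 (i), second part: Let `R` be a right ideal of
`B⁺` and `R' = Δ̄⁻¹(Ā ⊗ R)`.  Then `R'` is a right ideal of `B⁺` contained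
in `R`, it satisfies `Δ̄(R') ⊆ Ā ⊗ R'`, and `δ_R = δ_{R'}` (the two
associated equivariant derivations have the same vanishing linear
combinations, hence coincide). -/
theorem Rprime_right_ideal_and_same_derivation
    (hcomulB : ∀ b : ↥B,
      (TensorProduct.map LinearMap.id B.val.toLinearMap) (comulB b)
        = Coalgebra.comul (b : A))
    (R : Submodule ℂ ↥B) (hR1 : R ≤ Bplus A B)
    (hR2 : ∀ x ∈ R, ∀ b ∈ Bplus A B, x * b ∈ R) :
    let RA : Submodule ℂ A := R.map B.val.toLinearMap
    let R' : Submodule ℂ A := Submodule.comap (DeltaBar A B) (AbarOx A B RA)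
    -- `R' ⊆ R`:
    (R' ≤ RA) ∧
    -- `R'` is a right ideal of `B⁺`:
    (∀ x ∈ R', ∀ b : ↥B, epsB A B b = 0 → x * (b : A) ∈ R') ∧
    -- `Δ̄(R') ⊆ Ā ⊗ R'`:
    (∀ x ∈ R', DeltaBar A B x ∈ AbarOx A B R') ∧
    -- `δ_R = δ_{R'}`:
    (∀ L : List (↥B × ↥B),
      (L.map fun p => PhiE A B comulB p.1 p.2).sum ∈ AOx A RA ↔
      (L.map fun p => PhiE A B comulB p.1 p.2).sum ∈ AOx A R') := by

  intro RA R'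
  have hRAcl : ∀ x ∈ RA, ∀ c : ↥B, x * (c : A) ∈ RA := by
    rintro x ⟨r, hr, rfl⟩ c
    have hc : c - epsB A B c • 1 ∈ Bplus A B := by
      rw [Bplus, LinearMap.mem_ker]; exact aux_epsB_plus A B c
    have h1 : r * c = r * (c - epsB A B c • 1) + epsB A B c • r := by
      rw [mul_sub, mul_smul_comm, mul_one, sub_add_cancel]
    refine ⟨r * c, ?_, by simp⟩
    rw [h1]
    exact Submodule.add_mem _ (hR2 r hr _ hc) (Submodule.smul_mem _ _ hr)
  have part1 : R' ≤ RA := by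
    intro x hx
    rw [Submodule.mem_comap] at hx
    have hker : BplusA A B ≤ LinearMap.ker (Coalgebra.counit (R := ℂ) (A := A)) := by
      intro y hy
      rw [LinearMap.mem_ker]
      induction hy using Submodule.span_induction with
      | mem z hz =>
          obtain ⟨b, hb, a, rfl⟩ := hz
          rw [Bialgebra.counit_mul, aux_counit_coe, hb, zero_mul]
      | zero => simp
      | add y z _ _ hy hz => rw [map_add, hy, hz, add_zero]
      | smul c y _ hy => rw [map_smul, hy, smul_zero]
    have h1 : (TensorProduct.lid ℂ A) ((TensorProduct.map
        (Submodule.liftQ (BplusA A B) (Coalgebra.counit (R := ℂ)) hker) LinearMap.id)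
        (DeltaBar A B x)) = x := by
      show (TensorProduct.lid ℂ A) ((TensorProduct.map
        (Submodule.liftQ (BplusA A B) (Coalgebra.counit (R := ℂ)) hker) LinearMap.id)
        ((TensorProduct.map (BplusA A B).mkQ LinearMap.id) (Coalgebra.comul x))) = x
      rw [aux_mapmap, Submodule.liftQ_mkQ, LinearMap.id_comp]
      have h2 : (TensorProduct.map (Coalgebra.counit (R := ℂ)) (LinearMap.id : A →ₗ[ℂ] A))
          (Coalgebra.comul x) = (1:ℂ) ⊗ₜ x := Coalgebra.rTensor_counit_comul x
      rw [h2, TensorProduct.lid_tmul, one_smul]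
    rw [← h1]
    obtain ⟨z, hz⟩ := hx
    rw [← hz]
    clear h1 hz
    induction z using TensorProduct.induction_on with
    | zero => simpa using Submodule.zero_mem _
    | tmul abar r =>
        rw [TensorProduct.map_tmul, TensorProduct.map_tmul, TensorProduct.lid_tmul]
        exact Submodule.smul_mem _ _ r.2
    | add z₁ z₂ h₁ h₂ =>
        rw [map_add, map_add, map_add]
        exact Submodule.add_mem _ h₁ h₂
  have part2 : ∀ x ∈ R', ∀ b : ↥B, epsB A B b = 0 → x * (b : A) ∈ R' := by
    intro x hx b hb
    rw [Submodule.mem_comap] at hx ⊢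
    obtain ⟨t, htm, hte⟩ := aux_AbarOx_lift A B RA hx
    have hker : (TensorProduct.map (BplusA A B).mkQ LinearMap.id) (Coalgebra.comul x - t) = 0 := by
      rw [map_sub, hte]
      show DeltaBar A B x - DeltaBar A B x = 0
      rw [sub_self]
    have hrange : Coalgebra.comul x - t ∈ LinearMap.range
        (TensorProduct.map (BplusA A B).subtype (LinearMap.id : A →ₗ[ℂ] A)) := by
      have h := (rTensor_mkQ (Q := A) (BplusA A B)).le
        (show Coalgebra.comul x - t ∈ LinearMap.ker
          (LinearMap.rTensor A (BplusA A B).mkQ) from hker)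
      exact h
    have hmul0 : (Coalgebra.comul x - t) * Coalgebra.comul ((b : A)) ∈ LinearMap.range
        (TensorProduct.map (BplusA A B).subtype (LinearMap.id : A →ₗ[ℂ] A)) :=
      aux_ker_mul A B hrange _
    have hA : DeltaBar A B (x * (b : A))
        = (TensorProduct.map (BplusA A B).mkQ LinearMap.id) (t * Coalgebra.comul ((b : A)))
          + (TensorProduct.map (BplusA A B).mkQ LinearMap.id)
              ((Coalgebra.comul x - t) * Coalgebra.comul ((b : A))) := by
      rw [← map_add, sub_mul, add_sub_cancel]
      show (TensorProduct.map (BplusA A B).mkQ LinearMap.id) (Coalgebra.comul (x * (b : A))) = _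
      rw [Bialgebra.comul_mul]
    rw [hA]
    apply Submodule.add_mem
    · exact aux_map_AOx A B RA (aux_AOx_mul A B comulB RA hRAcl b (hcomulB b) htm)
    · have h0 : (TensorProduct.map (BplusA A B).mkQ LinearMap.id)
          ((Coalgebra.comul x - t) * Coalgebra.comul ((b : A))) = 0 := by
        have h := (rTensor_mkQ (Q := A) (BplusA A B)).ge hmul0
        exact h
      rw [h0]
      exact Submodule.zero_mem _
  have part3 : ∀ x ∈ R', DeltaBar A B x ∈ AbarOx A B R' := by
    intro x hx
    rw [Submodule.mem_comap] at hx
    have i1 : TensorProduct.map (BplusA A B).mkQ Coalgebra.comul (Coalgebra.comul x)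
        = TensorProduct.map (BplusA A B).mkQ (LinearMap.id : A ⊗[ℂ] A →ₗ[ℂ] A ⊗[ℂ] A)
            (TensorProduct.map LinearMap.id Coalgebra.comul (Coalgebra.comul x)) := by
      rw [aux_mapmap, LinearMap.comp_id, LinearMap.id_comp]
    have i2 : TensorProduct.map LinearMap.id Coalgebra.comul (Coalgebra.comul x)
        = (TensorProduct.assoc ℂ A A A)
            (TensorProduct.map Coalgebra.comul LinearMap.id (Coalgebra.comul x)) :=
      (Coalgebra.coassoc_apply x).symm
    have i0 : LinearMap.lTensor (A ⧸ BplusA A B) (DeltaBar A B) (DeltaBar A B x)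
        = TensorProduct.map (BplusA A B).mkQ (DeltaBar A B) (Coalgebra.comul x) := by
      show TensorProduct.map LinearMap.id (DeltaBar A B)
        ((TensorProduct.map (BplusA A B).mkQ LinearMap.id) (Coalgebra.comul x)) = _
      rw [aux_mapmap, LinearMap.id_comp, LinearMap.comp_id]
    have i3 : TensorProduct.map (BplusA A B).mkQ (DeltaBar A B) (Coalgebra.comul x)
        = TensorProduct.map LinearMap.id (TensorProduct.map (BplusA A B).mkQ LinearMap.id)
            (TensorProduct.map (BplusA A B).mkQ Coalgebra.comul (Coalgebra.comul x)) := by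
      rw [aux_mapmap, LinearMap.id_comp]
      rfl
    have i4 : TensorProduct.map LinearMap.id (TensorProduct.map (BplusA A B).mkQ LinearMap.id)
          (TensorProduct.map (BplusA A B).mkQ (LinearMap.id : A ⊗[ℂ] A →ₗ[ℂ] A ⊗[ℂ] A)
            ((TensorProduct.assoc ℂ A A A)
              (TensorProduct.map Coalgebra.comul LinearMap.id (Coalgebra.comul x))))
        = TensorProduct.map (BplusA A B).mkQ (TensorProduct.map (BplusA A B).mkQ LinearMap.id)
            ((TensorProduct.assoc ℂ A A A)
              (TensorProduct.map Coalgebra.comul LinearMap.id (Coalgebra.comul x))) := by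
      rw [aux_mapmap, LinearMap.id_comp, LinearMap.comp_id]
    have i5 := TensorProduct.map_map_assoc ((BplusA A B).mkQ) ((BplusA A B).mkQ)
      (LinearMap.id : A →ₗ[ℂ] A)
      (TensorProduct.map Coalgebra.comul LinearMap.id (Coalgebra.comul x))
    have i6 : TensorProduct.map (Submodule.liftQ (BplusA A B)
          ((TensorProduct.map (BplusA A B).mkQ (BplusA A B).mkQ) ∘ₗ Coalgebra.comul)
          (aux_q_ker A B comulB hcomulB)) LinearMap.id (DeltaBar A B x)
        = TensorProduct.map (TensorProduct.map (BplusA A B).mkQ (BplusA A B).mkQ) LinearMap.id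
            (TensorProduct.map Coalgebra.comul LinearMap.id (Coalgebra.comul x)) := by
      show TensorProduct.map (Submodule.liftQ (BplusA A B)
          ((TensorProduct.map (BplusA A B).mkQ (BplusA A B).mkQ) ∘ₗ Coalgebra.comul)
          (aux_q_ker A B comulB hcomulB)) LinearMap.id
          ((TensorProduct.map (BplusA A B).mkQ LinearMap.id) (Coalgebra.comul x)) = _
      rw [aux_mapmap, aux_mapmap, Submodule.liftQ_mkQ]
    have key : LinearMap.lTensor (A ⧸ BplusA A B) (DeltaBar A B) (DeltaBar A B x)
        = (TensorProduct.assoc ℂ (A ⧸ BplusA A B) (A ⧸ BplusA A B) A)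
            ((TensorProduct.map (Submodule.liftQ (BplusA A B)
                ((TensorProduct.map (BplusA A B).mkQ (BplusA A B).mkQ) ∘ₗ Coalgebra.comul)
                (aux_q_ker A B comulB hcomulB)) LinearMap.id) (DeltaBar A B x)) := by
      rw [i0, i3, i1, i2, i4, i5, i6]
    have main := lTensor_mem_range_of (A ⧸ BplusA A B) A ((A ⧸ BplusA A B) ⊗[ℂ] A)
        (DeltaBar A B) (AbarOx A B RA) (DeltaBar A B x) ?_
    · exact main
    · rw [key]
      obtain ⟨z, hz⟩ := hx
      rw [← hz, aux_mapmap, LinearMap.comp_id, LinearMap.id_comp]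
      rw [show (TensorProduct.map (Submodule.liftQ (BplusA A B)
            ((TensorProduct.map (BplusA A B).mkQ (BplusA A B).mkQ) ∘ₗ Coalgebra.comul)
            (aux_q_ker A B comulB hcomulB)) RA.subtype) z
          = (TensorProduct.map LinearMap.id RA.subtype)
              ((TensorProduct.map (Submodule.liftQ (BplusA A B)
                ((TensorProduct.map (BplusA A B).mkQ (BplusA A B).mkQ) ∘ₗ Coalgebra.comul)
                (aux_q_ker A B comulB hcomulB)) LinearMap.id) z) by
          rw [aux_mapmap, LinearMap.id_comp, LinearMap.comp_id]]
      exact aux_assoc_mem A B _ RA _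
  refine ⟨part1, part2, part3, ?_⟩
  intro L
  constructor
  · intro hsum
    have hKI : ∀ a b : ↥B, (TensorProduct.map LinearMap.id (DeltaBar A B))
        (PhiE A B comulB a b)
        = (TensorProduct.assoc ℂ A (A ⧸ BplusA A B) A)
            ((TensorProduct.map ((TensorProduct.map LinearMap.id (BplusA A B).mkQ) ∘ₗ Coalgebra.comul)
              LinearMap.id) (PhiE A B comulB a b)) := by
      intro a b
      have hSI1map : (DeltaBar A B) ∘ₗ ((plusA A) ∘ₗ B.val.toLinearMap)
          = (TensorProduct.map (BplusA A B).mkQ ((plusA A) ∘ₗ B.val.toLinearMap)) ∘ₗ comulB :=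
        LinearMap.ext fun c => by
          simpa using aux_DeltaBar_plus A B comulB c (hcomulB c)
      have hCLmap : ((TensorProduct.map LinearMap.id (BplusA A B).mkQ) ∘ₗ Coalgebra.comul)
            ∘ₗ LinearMap.mulLeft ℂ ((a : A))
          = (TensorProduct.map (LinearMap.mulLeft ℂ ((a : A))) LinearMap.id)
              ∘ₗ ((TensorProduct.map LinearMap.id (BplusA A B).mkQ) ∘ₗ Coalgebra.comul) :=
        LinearMap.ext fun u => by
          simp only [LinearMap.comp_apply, LinearMap.mulLeft_apply]
          rw [Bialgebra.comul_mul]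
          exact aux_CL A B comulB a (hcomulB a) (Coalgebra.comul u)
      have j0 : TensorProduct.map LinearMap.id (DeltaBar A B)
            ((TensorProduct.map (LinearMap.mulLeft ℂ (a : A))
              ((plusA A) ∘ₗ B.val.toLinearMap)) (comulB b))
          = TensorProduct.map (LinearMap.mulLeft ℂ (a : A))
              ((DeltaBar A B) ∘ₗ ((plusA A) ∘ₗ B.val.toLinearMap)) (comulB b) := by
        rw [aux_mapmap, LinearMap.id_comp]
      have j1 : TensorProduct.map LinearMap.id
            (TensorProduct.map (BplusA A B).mkQ ((plusA A) ∘ₗ B.val.toLinearMap))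
            (TensorProduct.map (LinearMap.mulLeft ℂ (a : A)) comulB (comulB b))
          = TensorProduct.map (LinearMap.mulLeft ℂ (a : A))
              ((TensorProduct.map (BplusA A B).mkQ ((plusA A) ∘ₗ B.val.toLinearMap)) ∘ₗ comulB)
              (comulB b) := by
        rw [aux_mapmap, LinearMap.id_comp]
      have j2 : TensorProduct.map (LinearMap.mulLeft ℂ (a : A)) LinearMap.id
            (TensorProduct.map LinearMap.id comulB (comulB b))
          = TensorProduct.map (LinearMap.mulLeft ℂ (a : A)) comulB (comulB b) := by
        rw [aux_mapmap, LinearMap.comp_id, LinearMap.id_comp]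
      have j3 : TensorProduct.map LinearMap.id comulB (comulB b)
          = (TensorProduct.assoc ℂ A A ↥B)
              ((TensorProduct.map Coalgebra.comul LinearMap.id) (comulB b)) :=
        (aux_comulB_coassoc A B comulB hcomulB b).symm
      have j4 : TensorProduct.map LinearMap.id
            (TensorProduct.map (BplusA A B).mkQ ((plusA A) ∘ₗ B.val.toLinearMap))
            (TensorProduct.map (LinearMap.mulLeft ℂ (a : A)) LinearMap.id
              ((TensorProduct.assoc ℂ A A ↥B)
                ((TensorProduct.map Coalgebra.comul LinearMap.id) (comulB b))))
          = TensorProduct.map (LinearMap.mulLeft ℂ (a : A))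
              (TensorProduct.map (BplusA A B).mkQ ((plusA A) ∘ₗ B.val.toLinearMap))
              ((TensorProduct.assoc ℂ A A ↥B)
                ((TensorProduct.map Coalgebra.comul LinearMap.id) (comulB b))) := by
        rw [aux_mapmap, LinearMap.id_comp, LinearMap.comp_id]
      have j5 := TensorProduct.map_map_assoc (LinearMap.mulLeft ℂ (a : A)) ((BplusA A B).mkQ)
        ((plusA A) ∘ₗ B.val.toLinearMap)
        ((TensorProduct.map Coalgebra.comul LinearMap.id) (comulB b))
      have hL : (TensorProduct.map LinearMap.id (DeltaBar A B)) (PhiE A B comulB a b)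
          = (TensorProduct.assoc ℂ A (A ⧸ BplusA A B) A)
              ((TensorProduct.map (TensorProduct.map (LinearMap.mulLeft ℂ (a : A)) (BplusA A B).mkQ)
                ((plusA A) ∘ₗ B.val.toLinearMap))
                (TensorProduct.map Coalgebra.comul LinearMap.id (comulB b))) := by
        show TensorProduct.map LinearMap.id (DeltaBar A B)
            ((TensorProduct.map (LinearMap.mulLeft ℂ (a : A))
              ((plusA A) ∘ₗ B.val.toLinearMap)) (comulB b)) = _
        rw [j0, hSI1map, ← j1, ← j2, j3, j4, j5]
      have r0 : TensorProduct.map ((TensorProduct.map LinearMap.id (BplusA A B).mkQ) ∘ₗ Coalgebra.comul)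
            LinearMap.id ((TensorProduct.map (LinearMap.mulLeft ℂ (a : A))
              ((plusA A) ∘ₗ B.val.toLinearMap)) (comulB b))
          = TensorProduct.map (((TensorProduct.map LinearMap.id (BplusA A B).mkQ) ∘ₗ Coalgebra.comul)
              ∘ₗ LinearMap.mulLeft ℂ (a : A)) ((plusA A) ∘ₗ B.val.toLinearMap) (comulB b) := by
        rw [aux_mapmap, LinearMap.id_comp]
      have r1 : TensorProduct.map (TensorProduct.map (LinearMap.mulLeft ℂ (a : A))
            LinearMap.id) LinearMap.id
            (TensorProduct.map ((TensorProduct.map LinearMap.id (BplusA A B).mkQ) ∘ₗ Coalgebra.comul)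
              ((plusA A) ∘ₗ B.val.toLinearMap) (comulB b))
          = TensorProduct.map ((TensorProduct.map (LinearMap.mulLeft ℂ (a : A)) LinearMap.id)
              ∘ₗ ((TensorProduct.map LinearMap.id (BplusA A B).mkQ) ∘ₗ Coalgebra.comul))
              ((plusA A) ∘ₗ B.val.toLinearMap) (comulB b) := by
        rw [aux_mapmap, LinearMap.id_comp]
      have r2 : TensorProduct.map (TensorProduct.map LinearMap.id (BplusA A B).mkQ)
            ((plusA A) ∘ₗ B.val.toLinearMap)
            (TensorProduct.map Coalgebra.comul LinearMap.id (comulB b))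
          = TensorProduct.map ((TensorProduct.map LinearMap.id (BplusA A B).mkQ) ∘ₗ Coalgebra.comul)
              ((plusA A) ∘ₗ B.val.toLinearMap) (comulB b) := by
        rw [aux_mapmap, LinearMap.comp_id]
      have r3 : TensorProduct.map (TensorProduct.map (LinearMap.mulLeft ℂ (a : A))
            LinearMap.id) LinearMap.id
            (TensorProduct.map (TensorProduct.map LinearMap.id (BplusA A B).mkQ)
              ((plusA A) ∘ₗ B.val.toLinearMap)
              (TensorProduct.map Coalgebra.comul LinearMap.id (comulB b)))
          = TensorProduct.map (TensorProduct.map (LinearMap.mulLeft ℂ (a : A)) (BplusA A B).mkQ)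
              ((plusA A) ∘ₗ B.val.toLinearMap)
              (TensorProduct.map Coalgebra.comul LinearMap.id (comulB b)) := by
        rw [aux_mapmap, LinearMap.id_comp, ← TensorProduct.map_comp, LinearMap.comp_id,
          LinearMap.id_comp]
      have hR : (TensorProduct.assoc ℂ A (A ⧸ BplusA A B) A)
          ((TensorProduct.map ((TensorProduct.map LinearMap.id (BplusA A B).mkQ) ∘ₗ Coalgebra.comul)
            LinearMap.id) (PhiE A B comulB a b))
          = (TensorProduct.assoc ℂ A (A ⧸ BplusA A B) A)
              ((TensorProduct.map (TensorProduct.map (LinearMap.mulLeft ℂ (a : A)) (BplusA A B).mkQ)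
                ((plusA A) ∘ₗ B.val.toLinearMap))
                (TensorProduct.map Coalgebra.comul LinearMap.id (comulB b))) := by
        refine congrArg _ ?_
        show TensorProduct.map ((TensorProduct.map LinearMap.id (BplusA A B).mkQ) ∘ₗ Coalgebra.comul)
            LinearMap.id ((TensorProduct.map (LinearMap.mulLeft ℂ (a : A))
              ((plusA A) ∘ₗ B.val.toLinearMap)) (comulB b)) = _
        rw [r0, hCLmap, ← r1, ← r2, r3]
      exact hL.trans hR.symm
    apply lTensor_mem_range_of A A ((A ⧸ BplusA A B) ⊗[ℂ] A)
      (DeltaBar A B) (AbarOx A B RA) _ ?_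
    have hsum2 : LinearMap.lTensor A (DeltaBar A B)
        ((L.map fun p => PhiE A B comulB p.1 p.2).sum)
        = (TensorProduct.assoc ℂ A (A ⧸ BplusA A B) A)
            ((TensorProduct.map ((TensorProduct.map LinearMap.id (BplusA A B).mkQ) ∘ₗ Coalgebra.comul)
              LinearMap.id) ((L.map fun p => PhiE A B comulB p.1 p.2).sum)) := by
      rw [map_list_sum, map_list_sum, map_list_sum, List.map_map, List.map_map, List.map_map]
      congr 1
      refine List.map_congr_left fun p _ => ?_
      exact hKI p.1 p.2
    rw [hsum2]
    obtain ⟨z, hz⟩ := hsum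
    rw [← hz, aux_mapmap, LinearMap.comp_id, LinearMap.id_comp]
    rw [show (TensorProduct.map ((TensorProduct.map LinearMap.id (BplusA A B).mkQ) ∘ₗ Coalgebra.comul)
          RA.subtype) z
        = (TensorProduct.map LinearMap.id RA.subtype)
            ((TensorProduct.map ((TensorProduct.map LinearMap.id (BplusA A B).mkQ) ∘ₗ Coalgebra.comul)
              LinearMap.id) z) by
        rw [aux_mapmap, LinearMap.id_comp, LinearMap.comp_id]]
    exact aux_assoc_mem A B A RA _
  · intro h
    exact aux_AOx_mono A part1 h

end
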